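/- Let s₀ ∈ ℝ and Γ ⊆ ℝ. Then {z ∈ ℍ : ∃ y' ∈ Γ, ∃ α with 0 < α < e^{s₀} and dist z (y' + αi) < log(e^{s₀}/α)} = {z ∈ ℍ : ∃ y' ∈ Γ, (z.re − y')² + (z.im − (1/2)·e^{s₀})² < (1/4)·e^{2s₀}}. -/

import Mathlib

/-!
Write `R = exp s₀`, `x = z.re - y'`, `y = z.im`. By the cosh formula for the hyperbolic distance,
`dist z (y' + αi) < log (R / α)` reads `R x² + (y - R)(R y - α²) < 0`, that is
`R (x² + y (y - R)) + α² (R - y) < 0`. The horodisc is `x² + y (y - R) < 0`; it forces `y < R`,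
so the `α`-term is positive, and it becomes negligible as `α → 0`.
-/

/-- The point `y' + α i` of the upper half-plane, for `α > 0`. -/
noncomputable def hpt (y' α : ℝ) (hα : 0 < α) : UpperHalfPlane :=
  ⟨(y' : ℂ) + (α : ℂ) * Complex.I, by simpa using hα⟩

@[simp]
lemma hpt_re (y' α : ℝ) (hα : 0 < α) : (hpt y' α hα).re = y' := by
  simp [hpt, UpperHalfPlane.re]

@[simp]
lemma hpt_im (y' α : ℝ) (hα : 0 < α) : (hpt y' α hα).im = α := by
  simp [hpt, UpperHalfPlane.im]

lemma dist_hpt_lt_log_iff (z : UpperHalfPlane) (y' : ℝ) {α R : ℝ} (hα : 0 < α) (hαR : α < R) :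
    dist z (hpt y' α hα) < Real.log (R / α) ↔
      R * (z.re - y') ^ 2 + (z.im - R) * (R * z.im - α ^ 2) < 0 := by
  have hR : 0 < R := hα.trans hαR
  have hlog : 0 < Real.log (R / α) := Real.log_pos ((one_lt_div hα).2 hαR)
  have hcosh : Real.cosh (Real.log (R / α)) = (R ^ 2 + α ^ 2) / (2 * R * α) := by
    rw [Real.cosh_log (by positivity)]
    field_simp
  have hy := z.im_pos
  rw [← Real.cosh_strictMonoOn.lt_iff_lt dist_nonneg hlog.le, UpperHalfPlane.cosh_dist', hcosh,
    hpt_re, hpt_im, div_lt_div_iff₀ (by positivity) (by positivity)]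
  constructor <;> intro h <;> nlinarith

lemma exists_pos_lt_and_sq_lt {R c : ℝ} (hR : 0 < R) (hc : 0 < c) :
    ∃ α, 0 < α ∧ α < R ∧ α ^ 2 < c := by
  refine ⟨min (R / 2) (√c / 2), by positivity, (min_le_left _ _).trans_lt (by linarith), ?_⟩
  calc min (R / 2) (√c / 2) ^ 2 ≤ (√c / 2) ^ 2 := by gcongr; exact min_le_right _ _
    _ = c / 4 := by rw [div_pow, Real.sq_sqrt hc.le]; norm_num
    _ < c := by linarith

lemma exists_param_iff_mem_horodisc {x y R : ℝ} (hy : 0 < y) (hR : 0 < R) :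
    (∃ α, 0 < α ∧ α < R ∧ R * x ^ 2 + (y - R) * (R * y - α ^ 2) < 0) ↔
      x ^ 2 + (y - 1 / 2 * R) ^ 2 < 1 / 4 * R ^ 2 := by
  have horodisc : x ^ 2 + (y - 1 / 2 * R) ^ 2 - 1 / 4 * R ^ 2 = x ^ 2 + y * (y - R) := by ring
  constructor
  · rintro ⟨α, hα, hαR, h⟩
    have hyR : y < R := by
      by_contra! hRy
      nlinarith [mul_nonneg (sub_nonneg.2 hRy) (by nlinarith : 0 ≤ R * y - α ^ 2), sq_nonneg x]
    nlinarith [mul_pos (pow_pos hα 2) (sub_pos.2 hyR)]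
  · intro h
    have hyR : y < R := by nlinarith [sq_nonneg x]
    have hc : 0 < -R * (x ^ 2 + y * (y - R)) / (R - y) :=
      div_pos (by nlinarith) (sub_pos.2 hyR)
    obtain ⟨α, hα, hαR, hα2⟩ := exists_pos_lt_and_sq_lt hR hc
    rw [lt_div_iff₀ (sub_pos.2 hyR)] at hα2
    exact ⟨α, hα, hαR, by nlinarith⟩

/-- The set `𝒟_{s₀}(Γ)` (union of the hyperbolic balls `B((α,y'), log(exp s₀/α))` over
`y' ∈ Γ` and `0 < α < exp s₀`) equals the union of the open horodiscs of Euclidean radius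
`(1/2) exp s₀` tangent to the real axis at the points of `Γ`. -/
theorem stmt_4 (s₀ : ℝ) (Γ : Set ℝ) :
    {z : UpperHalfPlane | ∃ y' ∈ Γ, ∃ α : ℝ, ∃ hα : 0 < α,
        α < Real.exp s₀ ∧ dist z (hpt y' α hα) < Real.log (Real.exp s₀ / α)} =
    {z : UpperHalfPlane | ∃ y' ∈ Γ,
        (z.re - y') ^ 2 + (z.im - (1 / 2) * Real.exp s₀) ^ 2 < (1 / 4) * Real.exp (2 * s₀)} := by
  have hexp : Real.exp (2 * s₀) = Real.exp s₀ ^ 2 := by rw [sq, ← Real.exp_add, two_mul]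
  refine Set.ext fun z => exists_congr fun y' => and_congr_right fun _ => ?_
  rw [hexp, ← exists_param_iff_mem_horodisc z.im_pos (Real.exp_pos s₀)]
  constructor
  · rintro ⟨α, hα, hαR, hdist⟩
    exact ⟨α, hα, hαR, (dist_hpt_lt_log_iff z y' hα hαR).1 hdist⟩
  · rintro ⟨α, hα, hαR, hineq⟩
    exact ⟨α, hα, hαR, (dist_hpt_lt_log_iff z y' hα hαR).2 hineq⟩
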